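/- In the concrete 2-dimensional representation of U_q gl(1|1), the super universal R-matrix ř = q^{−(C⊗N + N⊗C)}(1⊗1 + (1−q²) q^Nη ⊗ q^{−N}η⁺) evaluates (via ρ⊗ρ) to an invertible 4×4 matrix R̃ that satisfies the graded quantum Yang-Baxter equation R̃₁₂R̃₁₃R̃₂₃ = R̃₂₃R̃₁₃R̃₁₂, where the embeddings R̃₁₃ etc. use graded tensor legs (equivalently: P_s R̃ satisfies the braid relation, with P_s the super-flip P_s(e_i⊗e_j) = (−1)^{deg(i)deg(j)} e_j⊗e_i, deg(1)=0, deg(2)=1). -/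

import Mathlib

open Matrix Kronecker

noncomputable section

def ρη : Matrix (Fin 2) (Fin 2) ℂ := !![0, 1; 0, 0]
def ρηp : Matrix (Fin 2) (Fin 2) ℂ := !![0, 0; 1, 0]
def ρqN (q : ℂ) : Matrix (Fin 2) (Fin 2) ℂ := !![1, 0; 0, q]
/-- The grading operator `diag(1,−1)` of `ℂ^{1|1}` (Koszul-sign twist for a graded
tensor leg whose second factor is odd). -/
def gr : Matrix (Fin 2) (Fin 2) ℂ := !![1, 0; 0, -1]

/-- `R̃ = (ρ⊗ρ)(ř)` where `ř = q^{−(C⊗N+N⊗C)}(1⊗1 + (1−q²) q^N η ⊗ q^{−N}η⁺)`: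
the prefactor is `diag(1,q⁻¹,q⁻¹,q⁻²) = ρ(q^{−N}) ⊗ ρ(q^{−N})` (since `C` acts as 1),
and the odd-odd term carries the Koszul sign twist `gr` on the first leg. -/
def Rt (q : ℂ) : Matrix (Fin 2 × Fin 2) (Fin 2 × Fin 2) ℂ :=
  ((ρqN q)⁻¹ ⊗ₖ (ρqN q)⁻¹) *
    (1 + (1 - q ^ 2) • ((ρqN q * ρη * gr) ⊗ₖ ((ρqN q)⁻¹ * ρηp)))

/-- The super-flip `P_s(e_i⊗e_j) = (−1)^{deg i · deg j} e_j⊗e_i`. -/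
def Ps : Matrix (Fin 2 × Fin 2) (Fin 2 × Fin 2) ℂ :=
  Matrix.of fun p p' =>
    if p.1 = p'.2 ∧ p.2 = p'.1 then (if p = (1, 1) then -1 else 1) else 0

/-- `Ř_s = P_s · R̃`. -/
def Rs (q : ℂ) : Matrix (Fin 2 × Fin 2) (Fin 2 × Fin 2) ℂ := Ps * Rt q

/-- `Ř_s ⊗ I₂`. -/
def RsI (q : ℂ) : Matrix (Fin 2 × Fin 2 × Fin 2) (Fin 2 × Fin 2 × Fin 2) ℂ :=
  Matrix.of fun x y => Rs q (x.1, x.2.1) (y.1, y.2.1) * (if x.2.2 = y.2.2 then 1 else 0)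

/-- `I₂ ⊗ Ř_s`. -/
def IRs (q : ℂ) : Matrix (Fin 2 × Fin 2 × Fin 2) (Fin 2 × Fin 2 × Fin 2) ℂ :=
  Matrix.of fun x y => Rs q x.2 y.2 * (if x.1 = y.1 then 1 else 0)


/-! Write `t = q⁻¹` and order the basis of `ℂ² ⊗ ℂ²` lexicographically, as `finProdFinEquiv`
does: `(i, j) ↦ 2 i + j`. Then `R̃ = rMatrix t`, whose inverse is `rMatrix t⁻¹`, i.e. `R̃` at
`q⁻¹`, and `Ř_s = braidMatrix t`. The braid relation for `braidMatrix t` is a polynomial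
identity in `t`, checked entry by entry. -/

lemma ρqN_inv {q : ℂ} (hq : q ≠ 0) : (ρqN q)⁻¹ = ρqN q⁻¹ := by
  refine inv_eq_right_inv ?_
  rw [ρqN, ρqN, mul_fin_two, one_fin_two]
  simp [hq]

def rMatrix (t : ℂ) : Matrix (Fin 4) (Fin 4) ℂ :=
  !![1, 0, 0, 0;
     0, t, 1 - t ^ 2, 0;
     0, 0, t, 0;
     0, 0, 0, t ^ 2]

def superFlip : Matrix (Fin 4) (Fin 4) ℂ :=
  !![1, 0, 0, 0;
     0, 0, 1, 0;
     0, 1, 0, 0;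
     0, 0, 0, -1]

def braidMatrix (t : ℂ) : Matrix (Fin 4) (Fin 4) ℂ :=
  !![1, 0, 0, 0;
     0, 0, t, 0;
     0, t, 1 - t ^ 2, 0;
     0, 0, 0, -t ^ 2]

lemma rMatrix_mul_rMatrix_inv {t : ℂ} (ht : t ≠ 0) : rMatrix t * rMatrix t⁻¹ = 1 := by
  ext i j
  fin_cases i <;> fin_cases j <;>
    simp [rMatrix, mul_apply, Fin.sum_univ_four, one_apply, ht]
  field_simp
  ring

lemma superFlip_mul_rMatrix (t : ℂ) : superFlip * rMatrix t = braidMatrix t := by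
  ext i j
  fin_cases i <;> fin_cases j <;>
    simp [superFlip, rMatrix, braidMatrix, mul_apply, Fin.sum_univ_four]

lemma Rt_eq_rMatrix {q : ℂ} (hq : q ≠ 0) :
    Rt q = (rMatrix q⁻¹).submatrix finProdFinEquiv finProdFinEquiv := by
  rw [Rt, ρqN_inv hq]
  ext ⟨i, j⟩ ⟨k, l⟩
  fin_cases i <;> fin_cases j <;> fin_cases k <;> fin_cases l <;>
    simp [rMatrix, ρqN, ρη, ρηp, gr, mul_apply, Fintype.sum_prod_type, one_apply,
      finProdFinEquiv]
  · field_simp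
    ring
  · ring

lemma Rt_mul_Rt_inv {q : ℂ} (hq : q ≠ 0) : Rt q * Rt q⁻¹ = 1 := by
  rw [Rt_eq_rMatrix hq, Rt_eq_rMatrix (inv_ne_zero hq), submatrix_mul_equiv,
    rMatrix_mul_rMatrix_inv (inv_ne_zero hq), submatrix_one_equiv]

lemma Ps_eq_superFlip : Ps = superFlip.submatrix finProdFinEquiv finProdFinEquiv := by
  ext ⟨i, j⟩ ⟨k, l⟩
  fin_cases i <;> fin_cases j <;> fin_cases k <;> fin_cases l <;>
    simp [Ps, superFlip, finProdFinEquiv]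

lemma Rs_eq_braidMatrix {q : ℂ} (hq : q ≠ 0) :
    Rs q = (braidMatrix q⁻¹).submatrix finProdFinEquiv finProdFinEquiv := by
  rw [Rs, Ps_eq_superFlip, Rt_eq_rMatrix hq, submatrix_mul_equiv, superFlip_mul_rMatrix]

set_option maxHeartbeats 4000000 in
lemma RsI_mul_IRs_mul_RsI {q : ℂ} (hq : q ≠ 0) :
    RsI q * IRs q * RsI q = IRs q * RsI q * IRs q := by
  ext ⟨i, j, k⟩ ⟨a, b, c⟩
  fin_cases i <;> fin_cases j <;> fin_cases k <;> fin_cases a <;> fin_cases b <;>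
    fin_cases c <;>
    simp [RsI, IRs, Rs_eq_braidMatrix hq, braidMatrix, mul_apply, Fintype.sum_prod_type,
      Fin.sum_univ_two, finProdFinEquiv] <;>
    ring

theorem super_R_braid_general (q : ℂ) (hq : q ≠ 0) :
    (∃ S : Matrix (Fin 2 × Fin 2) (Fin 2 × Fin 2) ℂ, Rt q * S = 1 ∧ S * Rt q = 1) ∧
    RsI q * IRs q * RsI q = IRs q * RsI q * IRs q := by
  refine ⟨⟨Rt q⁻¹, Rt_mul_Rt_inv hq, ?_⟩, RsI_mul_IRs_mul_RsI hq⟩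
  simpa using Rt_mul_Rt_inv (inv_ne_zero hq)

/-- The super universal R-matrix of `U_q gl(1|1)` evaluates in the 2-dimensional
representation to an invertible matrix `R̃` such that `Ř_s = P_s·R̃` satisfies the
braid relation (equivalently, `R̃` satisfies the graded quantum Yang–Baxter
equation). -/
theorem super_R_braid (q : ℂ) (hq : q ≠ 0) (hq2 : q ^ 2 ≠ 1) :
    (∃ S : Matrix (Fin 2 × Fin 2) (Fin 2 × Fin 2) ℂ, Rt q * S = 1 ∧ S * Rt q = 1) ∧
    RsI q * IRs q * RsI q = IRs q * RsI q * IRs q :=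
  super_R_braid_general q hq
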